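/- For every non-negative integer n and nonzero complex a, the sum ∑_{j=0}^{2n+1} (-2/a)^j · η(-j, (a+1)/2) / ((2n+1-j)! · j!) equals 0, where η(-j, z) = E(j, z)/2 is half the j-th Euler polynomial. -/

import Mathlib

/-!
The Euler polynomials form an Appell sequence, `E_m(x + y) = ∑ⱼ C(m, j) E_j(x) y^(m-j)`, inherited
from that of the Bernoulli polynomials, which follows from `B_k' = k B_{k-1}`. With `x = (a + 1)/2`
and `y = -a/2`, so that `1/y = -2/a`, the sum in question is
`(-2/a)^(2n+1) / (2 (2n+1)!) · E_{2n+1}(1/2)`, and `E_{2n+1}(1/2) = 0` by the reflection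
`B_k(1 - x) = (-1)^k B_k(x)`.
-/

/-- The `n`-th Euler polynomial (as a function `ℂ → ℂ`), defined via Bernoulli
polynomials by `E_n(x) = 2^{n+1}/(n+1) * (B_{n+1}((x+1)/2) - B_{n+1}(x/2))`,
which is equivalent to the generating function `2 e^{xt}/(e^t+1) = ∑ E_n(x) t^n/n!`. -/
noncomputable def eulerPoly (n : ℕ) (x : ℂ) : ℂ :=
  (2 : ℂ) ^ (n + 1) / (n + 1) *
    (Polynomial.aeval ((x + 1) / 2) (Polynomial.bernoulli (n + 1)) -
     Polynomial.aeval (x / 2) (Polynomial.bernoulli (n + 1)))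

/-- The `n`-th Euler number, `E_n = 2^n E_n(1/2)`. -/
noncomputable def eulerNumber (n : ℕ) : ℂ := 2 ^ n * eulerPoly n (1 / 2)

open scoped Nat
open Polynomial Finset

namespace Polynomial

section DerivativeRecurrence

variable {R : Type*} [CommRing R] [IsAddTorsionFree R]

theorem eq_of_derivative_eq_of_coeff_zero_eq {f g : R[X]}
    (h : derivative f = derivative g) (h0 : f.coeff 0 = g.coeff 0) : f = g := by
  have hd : derivative (f - g) = 0 := by rw [derivative_sub, h, sub_self]
  simpa [sub_eq_zero, h0] using eq_C_of_derivative_eq_zero hd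

theorem comp_X_add_C_eq_sum_of_derivative_eq {p : ℕ → R[X]}
    (hp : ∀ k, derivative (p k) = k * p (k - 1)) (n : ℕ) (y : R) :
    (p n).comp (X + C y) =
      ∑ k ∈ range (n + 1), C (n.choose k * (p k).eval y) * X ^ (n - k) := by
  induction n with
  | zero =>
    obtain ⟨c, hc⟩ : ∃ c, p 0 = C c := ⟨_, eq_C_of_derivative_eq_zero (by simpa using hp 0)⟩
    simp [hc]
  | succ n ih =>
    apply eq_of_derivative_eq_of_coeff_zero_eq
    · have hchoose (k : ℕ) : ((n.choose k * (n + 1) : ℕ) : R[X]) =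
          ((n + 1).choose k * (n + 1 - k) : ℕ) := by rw [Nat.choose_mul_succ_eq]
      rw [derivative_comp, hp, mul_comp, natCast_comp, add_tsub_cancel_right, ih, derivative_sum,
        sum_range_succ _ (n + 1), mul_sum]
      simp only [derivative_add, derivative_X, derivative_C, add_zero, one_mul, tsub_self,
        pow_zero, mul_one, derivative_C_mul_X_pow]
      refine sum_congr rfl fun k _ => ?_
      rw [show n + 1 - k - 1 = n - k by omega]
      push_cast at hchoose ⊢
      simp only [C_mul, map_natCast]
      linear_combination C ((p k).eval y) * X ^ (n - k) * hchoose k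
    · simp only [coeff_zero_eq_eval_zero, eval_comp, eval_add, eval_X, eval_C, zero_add,
        eval_finsetSum, eval_mul, eval_pow, sum_range_succ _ (n + 1)]
      rw [sum_eq_zero fun k hk => by simp [zero_pow (by grind : n + 1 - k ≠ 0)]]
      simp

theorem eval_add_eq_sum_of_derivative_eq {p : ℕ → R[X]}
    (hp : ∀ k, derivative (p k) = k * p (k - 1)) (n : ℕ) (x y : R) :
    (p n).eval (x + y) = ∑ k ∈ range (n + 1), n.choose k * (p k).eval y * x ^ (n - k) := by
  simpa [eval_finsetSum] using congrArg (eval x) (comp_X_add_C_eq_sum_of_derivative_eq hp n y)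

end DerivativeRecurrence

theorem aeval_bernoulli_add {K : Type*} [Field K] [CharZero K] (n : ℕ) (x y : K) :
    aeval (x + y) (bernoulli n) =
      ∑ k ∈ range (n + 1), n.choose k * aeval y (bernoulli k) * x ^ (n - k) := by
  simp only [aeval_def, ← eval_map]
  refine eval_add_eq_sum_of_derivative_eq (p := fun k => (bernoulli k).map (algebraMap ℚ K))
    (fun k => ?_) n x y
  simp [derivative_map, derivative_bernoulli]

theorem aeval_bernoulli_one_sub {A : Type*} [CommRing A] [Algebra ℚ A] (n : ℕ) (x : A) :
    aeval (1 - x) (bernoulli n) = (-1) ^ n * aeval x (bernoulli n) := by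
  simpa [aeval_comp] using congrArg (aeval x) (bernoulli_comp_one_sub_X n)

end Polynomial

theorem eulerPoly_add (m : ℕ) (x y : ℂ) :
    eulerPoly m (x + y) = ∑ j ∈ range (m + 1), m.choose j * eulerPoly j x * y ^ (m - j) := by
  have hx1 : (x + y + 1) / 2 = y / 2 + (x + 1) / 2 := by ring
  have hx0 : (x + y) / 2 = y / 2 + x / 2 := by ring
  rw [eulerPoly, hx1, hx0, aeval_bernoulli_add, aeval_bernoulli_add, ← sum_sub_distrib,
    sum_range_succ', mul_add, mul_sum]
  simp only [Polynomial.bernoulli_zero, map_one, sub_self, mul_zero, add_zero]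
  refine sum_congr rfl fun j hj => ?_
  have hjm : j ≤ m := Nat.lt_succ_iff.mp (mem_range.mp hj)
  have hchoose : ((m + 1).choose (j + 1) : ℂ) * (j + 1) = (m + 1) * m.choose j := by
    exact_mod_cast (Nat.add_one_mul_choose_eq m j).symm
  have hpow : (2 : ℂ) ^ (m + 1) = 2 ^ (j + 1) * 2 ^ (m - j) := by
    rw [← pow_add]; congr 1; omega
  rw [eulerPoly, show m + 1 - (j + 1) = m - j by omega, hpow, div_pow]
  field_simp
  linear_combination y ^ (m - j) * (aeval ((x + 1) / 2) (bernoulli (j + 1)) -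
    aeval (x / 2) (bernoulli (j + 1))) * hchoose

theorem eulerPoly_two_mul_add_one_half (n : ℕ) : eulerPoly (2 * n + 1) (1 / 2) = 0 := by
  rw [eulerPoly, show ((1 : ℂ) / 2 + 1) / 2 = 1 - 1 / 2 / 2 by norm_num, aeval_bernoulli_one_sub,
    show 2 * n + 1 + 1 = 2 * (n + 1) by ring, pow_mul]
  norm_num

theorem sum_inv_pow_mul_div_factorial {K : Type*} [Field K] [CharZero K] (m : ℕ) (c : ℕ → K)
    {y : K} (hy : y ≠ 0) :
    ∑ j ∈ range (m + 1), y⁻¹ ^ j * c j / ((m - j)! * j !) =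
      y⁻¹ ^ m / m ! * ∑ j ∈ range (m + 1), m.choose j * c j * y ^ (m - j) := by
  rw [mul_sum]
  refine sum_congr rfl fun j hj => ?_
  have hjm : j ≤ m := Nat.lt_succ_iff.mp (mem_range.mp hj)
  have hm : (m ! : K) ≠ 0 := Nat.cast_ne_zero.mpr m.factorial_ne_zero
  rw [Nat.cast_choose K hjm, inv_pow, inv_pow, ← pow_sub_mul_pow y hjm]
  field_simp

/-- Vanishing sum of alternating Hurwitz zeta values at nonpositive integers:
`∑_{j=0}^{2n+1} (-2/a)^j η(-j,(a+1)/2) / ((2n+1-j)! j!) = 0`, where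
`η(-j,z) = E(j,z)/2` is half the `j`-th Euler polynomial. -/
theorem eta_neg_int_sum (n : ℕ) (a : ℂ) (ha : a ≠ 0) :
    ∑ j ∈ Finset.range (2 * n + 2),
      (-2 / a) ^ j * (eulerPoly j ((a + 1) / 2) / 2) /
        ((Nat.factorial (2 * n + 1 - j) : ℂ) * (Nat.factorial j : ℂ)) = 0 := by
  have hy : -a / 2 ≠ 0 := div_ne_zero (neg_ne_zero.mpr ha) two_ne_zero
  have hinv : (-a / 2)⁻¹ = -2 / a := by rw [inv_div, neg_div, div_neg]
  have hsum : ∑ j ∈ range (2 * n + 1 + 1),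
      (2 * n + 1).choose j * (eulerPoly j ((a + 1) / 2) / 2) * (-a / 2) ^ (2 * n + 1 - j) = 0 :=
    calc _ = eulerPoly (2 * n + 1) ((a + 1) / 2 + -a / 2) / 2 := by
          rw [eulerPoly_add, sum_div]
          exact sum_congr rfl fun j _ => by ring
      _ = 0 := by rw [show (a + 1) / 2 + -a / 2 = 1 / 2 by ring, eulerPoly_two_mul_add_one_half,
          zero_div]
  rw [← hinv, sum_inv_pow_mul_div_factorial _ _ hy, hsum, mul_zero]
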